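/- arXiv:0706.3595 — 4 statements merged into one kernel-verified Lean document; each statement's English description precedes it below -/
import Mathlib

section
/- Let ω be a smooth nowhere-vanishing function on an open set U ⊆ ℝ² satisfying (−Δ + u)ω = 0 for a smooth function u. If φ is smooth with (−Δ + u)φ = 0 and φ̃ is smooth satisfying the Moutard system (ωφ̃)_x = −ω²(φ/ω)_y and (ωφ̃)_y = ω²(φ/ω)_x, then (−Δ + ũ)φ̃ = 0, where ũ = u − 2Δ log ω. -/
/-- Partial derivative in the first coordinate. -/
noncomputable def pdx (f : ℝ × ℝ → ℝ) : ℝ × ℝ → ℝ :=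
  fun p => deriv (fun t => f (t, p.2)) p.1

/-- Partial derivative in the second coordinate. -/
noncomputable def pdy (f : ℝ × ℝ → ℝ) : ℝ × ℝ → ℝ :=
  fun p => deriv (fun t => f (p.1, t)) p.2

/-- Laplacian on ℝ². -/
noncomputable def lap (f : ℝ × ℝ → ℝ) : ℝ × ℝ → ℝ :=
  fun p => pdx (pdx f) p + pdy (pdy f) p

/-- Directional derivative function (fderiv applied to a vector). -/
noncomputable def pd (v : ℝ × ℝ) (f : ℝ × ℝ → ℝ) : ℝ × ℝ → ℝ :=
  fun q => fderiv ℝ f q v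

lemma diffAt {U : Set (ℝ × ℝ)} (hU : IsOpen U) {f : ℝ × ℝ → ℝ}
    (hf : ContDiffOn ℝ (⊤ : ℕ∞) f U) {p : ℝ × ℝ} (hp : p ∈ U) : DifferentiableAt ℝ f p :=
  (hf.contDiffAt (hU.mem_nhds hp)).differentiableAt (by simp)

lemma pdx_eq {f : ℝ × ℝ → ℝ} {p : ℝ × ℝ} (hf : DifferentiableAt ℝ f p) :
    pdx f p = pd (1, 0) f p := by
  have h1 : HasDerivAt (fun t : ℝ => ((t, p.2) : ℝ × ℝ)) (1, 0) p.1 :=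
    (hasDerivAt_id p.1).prodMk (hasDerivAt_const p.1 p.2)
  have h2 : HasDerivAt (fun t : ℝ => f (t, p.2)) (fderiv ℝ f p (1, 0)) p.1 :=
    hf.hasFDerivAt.comp_hasDerivAt p.1 h1
  exact h2.deriv

lemma pdy_eq {f : ℝ × ℝ → ℝ} {p : ℝ × ℝ} (hf : DifferentiableAt ℝ f p) :
    pdy f p = pd (0, 1) f p := by
  have h1 : HasDerivAt (fun t : ℝ => ((p.1, t) : ℝ × ℝ)) (0, 1) p.2 :=
    (hasDerivAt_const p.2 p.1).prodMk (hasDerivAt_id p.2)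
  have h2 : HasDerivAt (fun t : ℝ => f (p.1, t)) (fderiv ℝ f p (0, 1)) p.2 :=
    hf.hasFDerivAt.comp_hasDerivAt p.2 h1
  exact h2.deriv

lemma pd_contDiffOn {U : Set (ℝ × ℝ)} (hU : IsOpen U) {f : ℝ × ℝ → ℝ}
    (hf : ContDiffOn ℝ (⊤ : ℕ∞) f U) (v : ℝ × ℝ) : ContDiffOn ℝ (⊤ : ℕ∞) (pd v f) U :=
  (hf.fderiv_of_isOpen hU (by simp)).clm_apply contDiffOn_const

lemma pd_congr {f g : ℝ × ℝ → ℝ} {p : ℝ × ℝ} (h : f =ᶠ[nhds p] g) (v : ℝ × ℝ) :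
    pd v f p = pd v g p := by
  simp only [pd]; rw [h.fderiv_eq]

lemma pd_add {f g : ℝ × ℝ → ℝ} {p : ℝ × ℝ} (hf : DifferentiableAt ℝ f p)
    (hg : DifferentiableAt ℝ g p) (v : ℝ × ℝ) :
    pd v (fun q => f q + g q) p = pd v f p + pd v g p := by
  simp only [pd]; rw [fderiv_fun_add hf hg]; simp

lemma pd_mul {f g : ℝ × ℝ → ℝ} {p : ℝ × ℝ} (hf : DifferentiableAt ℝ f p)
    (hg : DifferentiableAt ℝ g p) (v : ℝ × ℝ) :
    pd v (fun q => f q * g q) p = pd v f p * g p + f p * pd v g p := by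
  simp only [pd]; rw [fderiv_fun_mul hf hg]
  simp only [ContinuousLinearMap.add_apply, ContinuousLinearMap.smul_apply, smul_eq_mul]
  ring

lemma pd_neg {f : ℝ × ℝ → ℝ} {p : ℝ × ℝ} (v : ℝ × ℝ) :
    pd v (fun q => -f q) p = -pd v f p := by
  simp only [pd]; rw [fderiv_fun_neg]; simp

lemma pd_inv {f : ℝ × ℝ → ℝ} {p : ℝ × ℝ} (hf : DifferentiableAt ℝ f p)
    (hne : f p ≠ 0) (v : ℝ × ℝ) :
    pd v (fun q => (f q)⁻¹) p = -pd v f p / (f p) ^ 2 := by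
  have h := (hasDerivAt_inv hne).comp_hasFDerivAt p hf.hasFDerivAt
  simp only [pd, Function.comp_def] at h ⊢
  rw [h.fderiv]
  simp only [ContinuousLinearMap.smul_apply, smul_eq_mul]
  field_simp

lemma pd_div {f g : ℝ × ℝ → ℝ} {p : ℝ × ℝ} (hf : DifferentiableAt ℝ f p)
    (hg : DifferentiableAt ℝ g p) (hne : g p ≠ 0) (v : ℝ × ℝ) :
    pd v (fun q => f q / g q) p
      = (pd v f p * g p - f p * pd v g p) / (g p) ^ 2 := by
  have : (fun q => f q / g q) = fun q => f q * (g q)⁻¹ := by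
    funext q; rw [div_eq_mul_inv]
  rw [this, pd_mul (g := fun q => (g q)⁻¹) hf (hg.inv hne), pd_inv hg hne]
  field_simp
  ring

lemma pd_log {f : ℝ × ℝ → ℝ} {p : ℝ × ℝ} (hf : DifferentiableAt ℝ f p)
    (hne : f p ≠ 0) (v : ℝ × ℝ) :
    pd v (fun q => Real.log (f q)) p = pd v f p / f p := by
  have h := (Real.hasDerivAt_log hne).comp_hasFDerivAt p hf.hasFDerivAt
  simp only [pd, Function.comp_def] at h ⊢
  rw [h.fderiv]
  simp only [ContinuousLinearMap.smul_apply, smul_eq_mul]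
  field_simp

lemma pd_comm {U : Set (ℝ × ℝ)} (hU : IsOpen U) {f : ℝ × ℝ → ℝ}
    (hf : ContDiffOn ℝ (⊤ : ℕ∞) f U) {p : ℝ × ℝ} (hp : p ∈ U) (v w : ℝ × ℝ) :
    pd v (pd w f) p = pd w (pd v f) p := by
  have hsym : IsSymmSndFDerivAt ℝ f p :=
    (hf.contDiffAt (hU.mem_nhds hp)).isSymmSndFDerivAt (by simp [minSmoothness_of_isRCLikeNormedField]; exact WithTop.coe_le_coe.mpr (le_top : (2 : ℕ∞) ≤ ⊤))
  have hdf : DifferentiableAt ℝ (fderiv ℝ f) p :=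
    ((hf.fderiv_of_isOpen hU (by exact_mod_cast le_top)).contDiffAt (hU.mem_nhds hp)).differentiableAt (by simp : ((⊤ : ℕ∞) : WithTop ℕ∞) ≠ 0)
  have key : ∀ z : ℝ × ℝ,
      fderiv ℝ (fun q => fderiv ℝ f q z) p = (fderiv ℝ (fderiv ℝ f) p).flip z := by
    intro z
    rw [fderiv_clm_apply hdf (differentiableAt_const z)]
    simp
  have e1 : pd v (pd w f) p = fderiv ℝ (fderiv ℝ f) p v w := by
    show (fderiv ℝ (fun q => fderiv ℝ f q w) p) v = _
    rw [key]
    rfl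
  have e2 : pd w (pd v f) p = fderiv ℝ (fderiv ℝ f) p w v := by
    show (fderiv ℝ (fun q => fderiv ℝ f q v) p) w = _
    rw [key]
    rfl
  rw [e1, e2]
  exact hsym v w

/-- For a smooth function on an open set, `pdx` agrees with `pd (1,0)` near any point. -/
lemma pdx_eventually {U : Set (ℝ × ℝ)} (hU : IsOpen U) {f : ℝ × ℝ → ℝ}
    (hf : ContDiffOn ℝ (⊤ : ℕ∞) f U) {p : ℝ × ℝ} (hp : p ∈ U) :
    pdx f =ᶠ[nhds p] pd (1, 0) f :=
  Filter.eventually_of_mem (hU.mem_nhds hp) fun q hq => pdx_eq (diffAt hU hf hq)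

lemma pdy_eventually {U : Set (ℝ × ℝ)} (hU : IsOpen U) {f : ℝ × ℝ → ℝ}
    (hf : ContDiffOn ℝ (⊤ : ℕ∞) f U) {p : ℝ × ℝ} (hp : p ∈ U) :
    pdy f =ᶠ[nhds p] pd (0, 1) f :=
  Filter.eventually_of_mem (hU.mem_nhds hp) fun q hq => pdy_eq (diffAt hU hf hq)

lemma pdx_congr {f g : ℝ × ℝ → ℝ} {p : ℝ × ℝ} (h : f =ᶠ[nhds p] g) :
    pdx f p = pdx g p := by
  apply Filter.EventuallyEq.deriv_eq
  have hc : ContinuousAt (fun t : ℝ => ((t, p.2) : ℝ × ℝ)) p.1 := by fun_prop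
  exact hc.tendsto.eventually h

lemma pdy_congr {f g : ℝ × ℝ → ℝ} {p : ℝ × ℝ} (h : f =ᶠ[nhds p] g) :
    pdy f p = pdy g p := by
  apply Filter.EventuallyEq.deriv_eq
  have hc : ContinuousAt (fun t : ℝ => ((p.1, t) : ℝ × ℝ)) p.2 := by fun_prop
  exact hc.tendsto.eventually h

/-- The Laplacian of a smooth function expressed via `pd`. -/
lemma lap_eq {U : Set (ℝ × ℝ)} (hU : IsOpen U) {f : ℝ × ℝ → ℝ}
    (hf : ContDiffOn ℝ (⊤ : ℕ∞) f U) {p : ℝ × ℝ} (hp : p ∈ U) :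
    lap f p = pd (1, 0) (pd (1, 0) f) p + pd (0, 1) (pd (0, 1) f) p := by
  have h1 : pdx (pdx f) p = pd (1, 0) (pd (1, 0) f) p := by
    rw [pdx_congr (pdx_eventually hU hf hp)]
    exact pdx_eq (diffAt hU (pd_contDiffOn hU hf _) hp)
  have h2 : pdy (pdy f) p = pd (0, 1) (pd (0, 1) f) p := by
    rw [pdy_congr (pdy_eventually hU hf hp)]
    exact pdy_eq (diffAt hU (pd_contDiffOn hU hf _) hp)
  simp only [lap, h1, h2]

theorem moutard_transforms_solutions
    (U : Set (ℝ × ℝ)) (hU : IsOpen U)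
    (u ω φ φt : ℝ × ℝ → ℝ)
    (hu : ContDiffOn ℝ (⊤ : ℕ∞) u U) (hω : ContDiffOn ℝ (⊤ : ℕ∞) ω U)
    (hφ : ContDiffOn ℝ (⊤ : ℕ∞) φ U) (hφt : ContDiffOn ℝ (⊤ : ℕ∞) φt U)
    (hωpos : ∀ p ∈ U, 0 < ω p)
    (hLω : ∀ p ∈ U, -lap ω p + u p * ω p = 0)
    (hLφ : ∀ p ∈ U, -lap φ p + u p * φ p = 0)
    (hMx : ∀ p ∈ U,
      pdx (fun q => ω q * φt q) p = -(ω p) ^ 2 * pdy (fun q => φ q / ω q) p)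
    (hMy : ∀ p ∈ U,
      pdy (fun q => ω q * φt q) p = (ω p) ^ 2 * pdx (fun q => φ q / ω q) p) :
    ∀ p ∈ U,
      -lap φt p + (u p - 2 * lap (fun q => Real.log (ω q)) p) * φt p = 0 := by
  intro p hp
  have hωne : ∀ q ∈ U, ω q ≠ 0 := fun q hq => ne_of_gt (hωpos q hq)
  set ψ : ℝ × ℝ → ℝ := fun q => φ q / ω q with hψdef
  set θ : ℝ × ℝ → ℝ := fun q => ω q * φt q with hθdef
  have hψ : ContDiffOn ℝ (⊤ : ℕ∞) ψ U := hφ.div hω hωne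
  have hθ : ContDiffOn ℝ (⊤ : ℕ∞) θ U := hω.mul hφt
  -- Moutard relations in terms of `pd`
  have Mx : ∀ q ∈ U, pd (1, 0) θ q = -(ω q) ^ 2 * pd (0, 1) ψ q := by
    intro q hq
    rw [← pdx_eq (diffAt hU hθ hq), ← pdy_eq (diffAt hU hψ hq)]
    exact hMx q hq
  have My : ∀ q ∈ U, pd (0, 1) θ q = (ω q) ^ 2 * pd (1, 0) ψ q := by
    intro q hq
    rw [← pdy_eq (diffAt hU hθ hq), ← pdx_eq (diffAt hU hψ hq)]
    exact hMy q hq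
  -- shorthand values at p
  set a := ω p
  have ha : a ≠ 0 := hωne p hp
  set wx := pd (1, 0) ω p
  set wy := pd (0, 1) ω p
  set wxx := pd (1, 0) (pd (1, 0) ω) p
  set wyy := pd (0, 1) (pd (0, 1) ω) p
  set tx := pd (1, 0) φt p
  set ty := pd (0, 1) φt p
  set txx := pd (1, 0) (pd (1, 0) φt) p
  set tyy := pd (0, 1) (pd (0, 1) φt) p
  set sx := pd (1, 0) ψ p
  set sy := pd (0, 1) ψ p
  set sxy := pd (1, 0) (pd (0, 1) ψ) p
  -- differentiability facts at points of U
  have dω : ∀ q ∈ U, DifferentiableAt ℝ ω q := fun q hq => diffAt hU hω hq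
  have dφt : ∀ q ∈ U, DifferentiableAt ℝ φt q := fun q hq => diffAt hU hφt hq
  have dψx : DifferentiableAt ℝ (pd (1, 0) ψ) p := diffAt hU (pd_contDiffOn hU hψ _) hp
  have dψy : DifferentiableAt ℝ (pd (0, 1) ψ) p := diffAt hU (pd_contDiffOn hU hψ _) hp
  have dωx : DifferentiableAt ℝ (pd (1, 0) ω) p := diffAt hU (pd_contDiffOn hU hω _) hp
  have dωy : DifferentiableAt ℝ (pd (0, 1) ω) p := diffAt hU (pd_contDiffOn hU hω _) hp
  have dφtx : DifferentiableAt ℝ (pd (1, 0) φt) p := diffAt hU (pd_contDiffOn hU hφt _) hp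
  have dφty : DifferentiableAt ℝ (pd (0, 1) φt) p := diffAt hU (pd_contDiffOn hU hφt _) hp
  have dωp : DifferentiableAt ℝ ω p := dω p hp
  have dφtp : DifferentiableAt ℝ φt p := dφt p hp
  -- derivative of -(ω)^2
  have dsq : DifferentiableAt ℝ (fun q => -(ω q) ^ 2) p := by
    exact (dωp.pow 2).neg
  have pd_negsq : ∀ v, pd v (fun q => -(ω q) ^ 2) p = -(2 * a * pd v ω p) := by
    intro v
    have h1 : (fun q => -(ω q) ^ 2) = fun q => -(ω q * ω q) := by
      funext q; ring
    rw [h1]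
    have h2 : pd v (fun q => ω q * ω q) p = pd v ω p * a + a * pd v ω p :=
      pd_mul dωp dωp v
    have h3 : pd v (fun q => -(ω q * ω q)) p = -pd v (fun q => ω q * ω q) p :=
      pd_neg v
    rw [h3, h2]; ring
  have dsq' : DifferentiableAt ℝ (fun q => (ω q) ^ 2) p := dωp.pow 2
  have pd_sq : ∀ v, pd v (fun q => (ω q) ^ 2) p = 2 * a * pd v ω p := by
    intro v
    have h1 : (fun q => (ω q) ^ 2) = fun q => ω q * ω q := by
      funext q; ring
    rw [h1, pd_mul dωp dωp v]; ring
  -- second derivatives of θ via Moutard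
  have pdθx_ev : pd (1, 0) θ =ᶠ[nhds p] fun q => -(ω q) ^ 2 * pd (0, 1) ψ q :=
    Filter.eventually_of_mem (hU.mem_nhds hp) fun q hq => Mx q hq
  have pdθy_ev : pd (0, 1) θ =ᶠ[nhds p] fun q => (ω q) ^ 2 * pd (1, 0) ψ q :=
    Filter.eventually_of_mem (hU.mem_nhds hp) fun q hq => My q hq
  have θxxM : pd (1, 0) (pd (1, 0) θ) p = -(2 * a * wx) * sy + -(a ^ 2) * sxy := by
    rw [pd_congr pdθx_ev, pd_mul dsq dψy, pd_negsq]
  have θyyM : pd (0, 1) (pd (0, 1) θ) p = 2 * a * wy * sx + a ^ 2 * sxy := by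
    rw [pd_congr pdθy_ev, pd_mul dsq' dψx, pd_sq, pd_comm hU hψ hp]
  -- second derivatives of θ via the product rule
  have prodx : pd (1, 0) θ =ᶠ[nhds p] fun q => pd (1, 0) ω q * φt q + ω q * pd (1, 0) φt q :=
    Filter.eventually_of_mem (hU.mem_nhds hp) fun q hq => by
      simpa using pd_mul (dω q hq) (dφt q hq) (1, 0)
  have prody : pd (0, 1) θ =ᶠ[nhds p] fun q => pd (0, 1) ω q * φt q + ω q * pd (0, 1) φt q :=
    Filter.eventually_of_mem (hU.mem_nhds hp) fun q hq => by
      simpa using pd_mul (dω q hq) (dφt q hq) (0, 1)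
  have θxxP : pd (1, 0) (pd (1, 0) θ) p = wxx * φt p + 2 * wx * tx + a * txx := by
    rw [pd_congr prodx,
      pd_add (f := fun q => pd (1, 0) ω q * φt q) (g := fun q => ω q * pd (1, 0) φt q) (dωx.mul dφtp) (dωp.mul dφtx),
      pd_mul dωx dφtp, pd_mul dωp dφtx]
    ring
  have θyyP : pd (0, 1) (pd (0, 1) θ) p = wyy * φt p + 2 * wy * ty + a * tyy := by
    rw [pd_congr prody,
      pd_add (f := fun q => pd (0, 1) ω q * φt q) (g := fun q => ω q * pd (0, 1) φt q) (dωy.mul dφtp) (dωp.mul dφty),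
      pd_mul dωy dφtp, pd_mul dωp dφty]
    ring
  -- first–order Moutard at p
  have M1 : wx * φt p + a * tx = -(a ^ 2) * sy := by
    have := Mx p hp
    rw [pd_mul dωp dφtp] at this
    linarith [this]
  have M2 : wy * φt p + a * ty = a ^ 2 * sx := by
    have := My p hp
    rw [pd_mul dωp dφtp] at this
    linarith [this]
  -- the equation for ω
  have hΔω : wxx + wyy = u p * a := by
    have := hLω p hp
    rw [lap_eq hU hω hp] at this
    linarith [this]
  -- Laplacian of log ω
  have hlogcd : ContDiffOn ℝ (⊤ : ℕ∞) (fun q => Real.log (ω q)) U := hω.log hωne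
  have pdlogx_ev : pd (1, 0) (fun q => Real.log (ω q)) =ᶠ[nhds p]
      fun q => pd (1, 0) ω q / ω q :=
    Filter.eventually_of_mem (hU.mem_nhds hp) fun q hq =>
      pd_log (dω q hq) (hωne q hq) (1, 0)
  have pdlogy_ev : pd (0, 1) (fun q => Real.log (ω q)) =ᶠ[nhds p]
      fun q => pd (0, 1) ω q / ω q :=
    Filter.eventually_of_mem (hU.mem_nhds hp) fun q hq =>
      pd_log (dω q hq) (hωne q hq) (0, 1)
  have hlaplog : lap (fun q => Real.log (ω q)) p
      = (wxx * a - wx * wx) / a ^ 2 + (wyy * a - wy * wy) / a ^ 2 := by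
    rw [lap_eq hU hlogcd hp, pd_congr pdlogx_ev, pd_congr pdlogy_ev,
      pd_div dωx dωp ha, pd_div dωy dωp ha]
  -- main computation
  have hEq1 : -(2 * a * wx) * sy + -(a ^ 2) * sxy = wxx * φt p + 2 * wx * tx + a * txx := by
    rw [← θxxM, θxxP]
  have hEq2 : 2 * a * wy * sx + a ^ 2 * sxy = wyy * φt p + 2 * wy * ty + a * tyy := by
    rw [← θyyM, θyyP]
  rw [lap_eq hU hφt hp, hlaplog]
  have key : a ^ 2 * (txx + tyy) = (-(u p) * a ^ 2 + 2 * wx ^ 2 + 2 * wy ^ 2) * φt p := by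
    linear_combination (-a) * hEq1 + (-a) * hEq2 + (-2 * wx) * M1 + (-2 * wy) * M2
      + (-(a * φt p)) * hΔω
  field_simp
  linear_combination -key - 2*a*(φt p)*hΔω
end

section
/- The function ψ₁(x,y) = (x + 2x² + xy − 2y²)/Q(x,y), with Q(x,y) = 160 + 4x² + 4y² + 16x³ + 4x²y + 16xy² + 4y³ + 17(x²+y²)², satisfies (−Δ + u)ψ₁ = 0 on ℝ², where u = −5120(1 + 8x + 2y + 17x² + 17y²)/Q². -/
/-- The denominator polynomial Q from Example 1. -/
noncomputable def Qpoly (p : ℝ × ℝ) : ℝ :=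
  160 + 4 * p.1 ^ 2 + 4 * p.2 ^ 2 + 16 * p.1 ^ 3 + 4 * p.1 ^ 2 * p.2
    + 16 * p.1 * p.2 ^ 2 + 4 * p.2 ^ 3 + 17 * (p.1 ^ 2 + p.2 ^ 2) ^ 2

/-- The potential u from Example 1. -/
noncomputable def upot (p : ℝ × ℝ) : ℝ :=
  -5120 * (1 + 8 * p.1 + 2 * p.2 + 17 * p.1 ^ 2 + 17 * p.2 ^ 2) / (Qpoly p) ^ 2

/-- The eigenfunction ψ₁ from Example 1. -/
noncomputable def psi1 (p : ℝ × ℝ) : ℝ :=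
  (p.1 + 2 * p.1 ^ 2 + p.1 * p.2 - 2 * p.2 ^ 2) / Qpoly p

/-- The eigenfunction ψ₂ from Example 1. -/
noncomputable def psi2 (p : ℝ × ℝ) : ℝ :=
  (2 * p.1 + 2 * p.2 + 3 * p.1 ^ 2 + 10 * p.1 * p.2 - 3 * p.2 ^ 2) / Qpoly p

/-!
Along each coordinate line `ψ₁` is a quotient of polynomials of degree at most four whose
denominator `Q` never vanishes, so both pure second derivatives come from the quotient rule
applied twice, and the equation reduces to a polynomial identity.
-/

lemma pdx_pdx_apply (f : ℝ × ℝ → ℝ) (x y : ℝ) :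
    pdx (pdx f) (x, y) = deriv (deriv fun t => f (t, y)) x := rfl

lemma pdy_pdy_apply (f : ℝ × ℝ → ℝ) (x y : ℝ) :
    pdy (pdy f) (x, y) = deriv (deriv fun t => f (x, t)) y := rfl

theorem deriv_deriv_div {f f' g g' : ℝ → ℝ} {f'' g'' x : ℝ}
    (hf : ∀ t, HasDerivAt f (f' t) t) (hf' : HasDerivAt f' f'' x)
    (hg : ∀ t, HasDerivAt g (g' t) t) (hg' : HasDerivAt g' g'' x) (hg0 : ∀ t, g t ≠ 0) :
    deriv (deriv fun t => f t / g t) x =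
      (f'' * g x ^ 2 - 2 * f' x * g' x * g x - f x * g'' * g x + 2 * f x * g' x ^ 2) / g x ^ 3 := by
  have hfirst : deriv (fun t => f t / g t) = fun t => (f' t * g t - f t * g' t) / g t ^ 2 :=
    funext fun t => ((hf t).fun_div (hg t) (hg0 t)).deriv
  have hsq : HasDerivAt (fun t => g t ^ 2) (2 * g x * g' x) x := by
    simpa using (hg x).fun_pow 2
  rw [hfirst, (((hf'.fun_mul (hg x)).fun_sub ((hf x).fun_mul hg')).fun_div hsq
    (pow_ne_zero 2 (hg0 x))).deriv]
  have hgx := hg0 x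
  field_simp
  ring

def quartic (a b c d e t : ℝ) : ℝ := a + b * t + c * t ^ 2 + d * t ^ 3 + e * t ^ 4

theorem hasDerivAt_quartic (a b c d e t : ℝ) :
    HasDerivAt (quartic a b c d e) (quartic b (2 * c) (3 * d) (4 * e) 0 t) t := by
  have h := ((((hasDerivAt_const t a).fun_add ((hasDerivAt_id' t).const_mul b)).fun_add
    ((hasDerivAt_pow 2 t).const_mul c)).fun_add ((hasDerivAt_pow 3 t).const_mul d)).fun_add
    ((hasDerivAt_pow 4 t).const_mul e)
  exact h.congr_deriv (by simp only [quartic]; ring)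

lemma Qpoly_eq (x y : ℝ) :
    Qpoly (x, y) = 160 + (x ^ 2 + y ^ 2) * ((17 * x + 8) ^ 2 + (17 * y + 2) ^ 2) / 17 := by
  simp only [Qpoly]; ring

lemma Qpoly_pos (x y : ℝ) : 0 < Qpoly (x, y) := by
  rw [Qpoly_eq]; positivity

lemma Qpoly_eq_quartic_fst (x y : ℝ) :
    Qpoly (x, y) = quartic (160 + 4 * y ^ 2 + 4 * y ^ 3 + 17 * y ^ 4) (16 * y ^ 2)
      (4 + 4 * y + 34 * y ^ 2) 16 17 x := by
  simp only [Qpoly, quartic]; ring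

lemma Qpoly_eq_quartic_snd (x y : ℝ) :
    Qpoly (x, y) = quartic (160 + 4 * x ^ 2 + 16 * x ^ 3 + 17 * x ^ 4) (4 * x ^ 2)
      (4 + 16 * x + 34 * x ^ 2) 4 17 y := by
  simp only [Qpoly, quartic]; ring

lemma psi1_eq_quartic_div_fst (y : ℝ) :
    (fun t => psi1 (t, y)) = fun t => quartic (-2 * y ^ 2) (1 + y) 2 0 0 t /
      quartic (160 + 4 * y ^ 2 + 4 * y ^ 3 + 17 * y ^ 4) (16 * y ^ 2) (4 + 4 * y + 34 * y ^ 2)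
        16 17 t := by
  ext t; rw [psi1, Qpoly_eq_quartic_fst]; congr 1; simp only [quartic]; ring

lemma psi1_eq_quartic_div_snd (x : ℝ) :
    (fun t => psi1 (x, t)) = fun t => quartic (x + 2 * x ^ 2) x (-2) 0 0 t /
      quartic (160 + 4 * x ^ 2 + 16 * x ^ 3 + 17 * x ^ 4) (4 * x ^ 2) (4 + 16 * x + 34 * x ^ 2)
        4 17 t := by
  ext t; rw [psi1, Qpoly_eq_quartic_snd]; congr 1; simp only [quartic]; ring

theorem psi1_in_kernel :
    ∀ p : ℝ × ℝ, -lap psi1 p + upot p * psi1 p = 0 := by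
  rintro ⟨x, y⟩
  have hQ := (Qpoly_pos x y).ne'
  rw [lap, pdx_pdx_apply, pdy_pdy_apply, psi1_eq_quartic_div_fst, psi1_eq_quartic_div_snd,
    deriv_deriv_div (hasDerivAt_quartic _ _ _ _ _) (hasDerivAt_quartic _ _ _ _ _ x)
      (hasDerivAt_quartic _ _ _ _ _) (hasDerivAt_quartic _ _ _ _ _ x)
      (fun t => Qpoly_eq_quartic_fst t y ▸ (Qpoly_pos t y).ne'),
    deriv_deriv_div (hasDerivAt_quartic _ _ _ _ _) (hasDerivAt_quartic _ _ _ _ _ y)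
      (hasDerivAt_quartic _ _ _ _ _) (hasDerivAt_quartic _ _ _ _ _ y)
      (fun t => Qpoly_eq_quartic_snd x t ▸ (Qpoly_pos x t).ne')]
  rw [upot, psi1]
  simp only [quartic, Qpoly] at hQ ⊢
  field_simp
  ring
end

section
/- The function ψ₂(x,y) = (2x + 2y + 3x² + 10xy − 3y²)/Q(x,y), with Q as above, belongs to L²(ℝ²). -/
open MeasureTheory Module

theorem memLp_two_of_abs_le_rpow_neg_one_add_norm_sq {E : Type*} [NormedAddCommGroup E]
    [NormedSpace ℝ E] [FiniteDimensional ℝ E] [MeasurableSpace E] [BorelSpace E]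
    {μ : Measure E} [μ.IsAddHaarMeasure] {f : E → ℝ} {C r : ℝ}
    (hf : AEStronglyMeasurable f μ) (hr : (finrank ℝ E : ℝ) < 2 * r)
    (hfC : ∀ x, |f x| ≤ C * (1 + ‖x‖ ^ 2) ^ (-r / 2)) : MemLp f 2 μ := by
  rw [memLp_two_iff_integrable_sq hf]
  refine ((integrable_rpow_neg_one_add_norm_sq (μ := μ) hr).const_mul (C ^ 2)).mono'
    (hf.pow 2) (ae_of_all _ fun x => ?_)
  calc ‖f x ^ 2‖ = |f x| ^ 2 := by rw [Real.norm_eq_abs, abs_pow]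
    _ ≤ (C * (1 + ‖x‖ ^ 2) ^ (-r / 2)) ^ 2 := pow_le_pow_left₀ (abs_nonneg _) (hfC x) 2
    _ = C ^ 2 * (1 + ‖x‖ ^ 2) ^ (-(2 * r) / 2) := by
      rw [mul_pow, ← Real.rpow_mul_natCast (by positivity)]; ring_nf

lemma Prod.norm_sq_le_fst_sq_add_snd_sq (p : ℝ × ℝ) : ‖p‖ ^ 2 ≤ p.1 ^ 2 + p.2 ^ 2 := by
  rw [Prod.norm_def, Real.norm_eq_abs, Real.norm_eq_abs]
  rcases max_choice |p.1| |p.2| with h | h <;> rw [h, sq_abs] <;>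
    linarith [sq_nonneg p.1, sq_nonneg p.2]

lemma sq_one_add_sq_add_sq_le_Qpoly (p : ℝ × ℝ) : (1 + p.1 ^ 2 + p.2 ^ 2) ^ 2 ≤ Qpoly p := by
  obtain ⟨x, y⟩ := p
  simp only [Qpoly]
  -- With r² = x² + y², the difference is (2r² + 4x + y)² + (x - 4y)² + 12r⁴ - 15r² + 159.
  nlinarith [sq_nonneg (2 * (x ^ 2 + y ^ 2) + (4 * x + y)), sq_nonneg (x - 4 * y),
    sq_nonneg x, sq_nonneg y]

lemma Qpoly_pos_s15 (p : ℝ × ℝ) : 0 < Qpoly p :=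
  (by positivity : 0 < (1 + p.1 ^ 2 + p.2 ^ 2) ^ 2).trans_le (sq_one_add_sq_add_sq_le_Qpoly p)

lemma continuous_psi2 : Continuous psi2 :=
  Continuous.div (by fun_prop) (by unfold Qpoly; fun_prop) fun p => (Qpoly_pos_s15 p).ne'

lemma abs_psi2_numerator_le (x y : ℝ) :
    |2 * x + 2 * y + 3 * x ^ 2 + 10 * x * y - 3 * y ^ 2| ≤ 15 * (1 + x ^ 2 + y ^ 2) := by
  rw [abs_le]
  constructor <;> nlinarith [sq_nonneg (x + y), sq_nonneg (x - y), sq_nonneg (x + 1),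
    sq_nonneg (y + 1), sq_nonneg (x - 1), sq_nonneg (y - 1)]

lemma abs_psi2_le (p : ℝ × ℝ) : |psi2 p| ≤ 15 / (1 + p.1 ^ 2 + p.2 ^ 2) := by
  calc |psi2 p| ≤ 15 * (1 + p.1 ^ 2 + p.2 ^ 2) / (1 + p.1 ^ 2 + p.2 ^ 2) ^ 2 := by
        rw [psi2, abs_div, abs_of_pos (Qpoly_pos_s15 p)]
        exact div_le_div₀ (by positivity) (abs_psi2_numerator_le p.1 p.2) (by positivity)
          (sq_one_add_sq_add_sq_le_Qpoly p)
    _ = 15 / (1 + p.1 ^ 2 + p.2 ^ 2) := by field_simp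

theorem psi2_memL2 : MeasureTheory.MemLp psi2 2 MeasureTheory.volume := by
  refine memLp_two_of_abs_le_rpow_neg_one_add_norm_sq (C := 15) (r := 2)
    continuous_psi2.aestronglyMeasurable (by norm_num) fun p => ?_
  calc |psi2 p| ≤ 15 / (1 + p.1 ^ 2 + p.2 ^ 2) := abs_psi2_le p
    _ ≤ 15 / (1 + ‖p‖ ^ 2) :=
        div_le_div_of_nonneg_left (by norm_num) (by positivity)
          (by linarith [Prod.norm_sq_le_fst_sq_add_snd_sq p])
    _ = 15 * (1 + ‖p‖ ^ 2) ^ (-2 / 2 : ℝ) := by norm_num [Real.rpow_neg_one, div_eq_mul_inv]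
end

section
/- Under the hypotheses of the general construction (ω₁, ω₂ smooth nowhere-vanishing solutions of (−Δ+u₀)ω = 0 on an open U ⊆ ℝ², θ₁ a nowhere-vanishing solution of the Moutard system for (ω₁,ω₂), and θ₂ = −(ω₁/ω₂)θ₁), the twice-transformed potentials agree: with u₁ = 2((ω₁)_x² + (ω₁)_y²)/ω₁² − u₀, u₂ = 2((ω₂)_x² + (ω₂)_y²)/ω₂² − u₀, one has 2((θ₁)_x² + (θ₁)_y²)/θ₁² − u₁ = 2((θ₂)_x² + (θ₂)_y²)/θ₂² − u₂ on U. -/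
theorem twice_transformed_potentials_agree
    (U : Set (ℝ × ℝ)) (hU : IsOpen U)
    (u₀ ω₁ ω₂ θ₁ : ℝ × ℝ → ℝ)
    (hu₀ : ContDiffOn ℝ (⊤ : ℕ∞) u₀ U)
    (hω₁ : ContDiffOn ℝ (⊤ : ℕ∞) ω₁ U) (hω₂ : ContDiffOn ℝ (⊤ : ℕ∞) ω₂ U)
    (hθ₁ : ContDiffOn ℝ (⊤ : ℕ∞) θ₁ U)
    (hω₁0 : ∀ p ∈ U, ω₁ p ≠ 0) (hω₂0 : ∀ p ∈ U, ω₂ p ≠ 0)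
    (hθ₁0 : ∀ p ∈ U, θ₁ p ≠ 0)
    (hLω₁ : ∀ p ∈ U, -lap ω₁ p + u₀ p * ω₁ p = 0)
    (hLω₂ : ∀ p ∈ U, -lap ω₂ p + u₀ p * ω₂ p = 0)
    (hMx : ∀ p ∈ U,
      pdx (fun q => ω₁ q * θ₁ q) p = -(ω₁ p) ^ 2 * pdy (fun q => ω₂ q / ω₁ q) p)
    (hMy : ∀ p ∈ U,
      pdy (fun q => ω₁ q * θ₁ q) p = (ω₁ p) ^ 2 * pdx (fun q => ω₂ q / ω₁ q) p) :
    ∀ p ∈ U,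
      let θ₂ : ℝ × ℝ → ℝ := fun q => -(ω₁ q / ω₂ q) * θ₁ q
      let u₁ := fun q => 2 * ((pdx ω₁ q) ^ 2 + (pdy ω₁ q) ^ 2) / (ω₁ q) ^ 2 - u₀ q
      let u₂ := fun q => 2 * ((pdx ω₂ q) ^ 2 + (pdy ω₂ q) ^ 2) / (ω₂ q) ^ 2 - u₀ q
      2 * ((pdx θ₁ p) ^ 2 + (pdy θ₁ p) ^ 2) / (θ₁ p) ^ 2 - u₁ p
        = 2 * ((pdx θ₂ p) ^ 2 + (pdy θ₂ p) ^ 2) / (θ₂ p) ^ 2 - u₂ p := by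
  intro p hp
  dsimp only
  have ha1 : ω₁ p ≠ 0 := hω₁0 p hp
  have ha2 : ω₂ p ≠ 0 := hω₂0 p hp
  have ht1 : θ₁ p ≠ 0 := hθ₁0 p hp
  -- x-slices
  have slicex : ∀ (f : ℝ × ℝ → ℝ), ContDiffOn ℝ (⊤ : ℕ∞) f U →
      HasDerivAt (fun t => f (t, p.2)) (pdx f p) p.1 := by
    intro f hf
    have hdf : DifferentiableAt ℝ f p :=
      (hf.contDiffAt (hU.mem_nhds hp)).differentiableAt (by simp)
    have hcomp : DifferentiableAt ℝ (fun t : ℝ => f (t, p.2)) p.1 := by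
      have h2 : DifferentiableAt ℝ (fun t : ℝ => (t, p.2)) p.1 :=
        differentiableAt_id.prodMk (differentiableAt_const _)
      exact DifferentiableAt.comp p.1 (by simpa using hdf) h2
    exact hcomp.hasDerivAt
  have slicey : ∀ (f : ℝ × ℝ → ℝ), ContDiffOn ℝ (⊤ : ℕ∞) f U →
      HasDerivAt (fun t => f (p.1, t)) (pdy f p) p.2 := by
    intro f hf
    have hdf : DifferentiableAt ℝ f p :=
      (hf.contDiffAt (hU.mem_nhds hp)).differentiableAt (by simp)
    have hcomp : DifferentiableAt ℝ (fun t : ℝ => f (p.1, t)) p.2 := by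
      have h2 : DifferentiableAt ℝ (fun t : ℝ => (p.1, t)) p.2 :=
        (differentiableAt_const _).prodMk differentiableAt_id
      exact DifferentiableAt.comp p.2 (by simpa using hdf) h2
    exact hcomp.hasDerivAt
  have H1x := slicex ω₁ hω₁
  have H2x := slicex ω₂ hω₂
  have Hθx := slicex θ₁ hθ₁
  have H1y := slicey ω₁ hω₁
  have H2y := slicey ω₂ hω₂
  have Hθy := slicey θ₁ hθ₁
  -- Moutard relations in coordinates
  have hE1 : pdx ω₁ p * θ₁ p + ω₁ p * pdx θ₁ p
      = -(ω₁ p) ^ 2 * ((pdy ω₂ p * ω₁ p - ω₂ p * pdy ω₁ p) / (ω₁ p) ^ 2) := by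
    have hl : deriv (fun t => ω₁ (t, p.2) * θ₁ (t, p.2)) p.1 = _ := (H1x.mul Hθx).deriv
    have hr : deriv (fun t => ω₂ (p.1, t) / ω₁ (p.1, t)) p.2 = _ := (H2y.div H1y ha1).deriv
    have := hMx p hp
    rw [show pdx (fun q => ω₁ q * θ₁ q) p
        = deriv (fun t => ω₁ (t, p.2) * θ₁ (t, p.2)) p.1 from rfl,
      show pdy (fun q => ω₂ q / ω₁ q) p
        = deriv (fun t => ω₂ (p.1, t) / ω₁ (p.1, t)) p.2 from rfl, hl, hr] at this
    exact this
  have hE2 : pdy ω₁ p * θ₁ p + ω₁ p * pdy θ₁ p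
      = (ω₁ p) ^ 2 * ((pdx ω₂ p * ω₁ p - ω₂ p * pdx ω₁ p) / (ω₁ p) ^ 2) := by
    have hl : deriv (fun t => ω₁ (p.1, t) * θ₁ (p.1, t)) p.2 = _ := (H1y.mul Hθy).deriv
    have hr : deriv (fun t => ω₂ (t, p.2) / ω₁ (t, p.2)) p.1 = _ := (H2x.div H1x ha1).deriv
    have := hMy p hp
    rw [show pdy (fun q => ω₁ q * θ₁ q) p
        = deriv (fun t => ω₁ (p.1, t) * θ₁ (p.1, t)) p.2 from rfl,
      show pdx (fun q => ω₂ q / ω₁ q) p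
        = deriv (fun t => ω₂ (t, p.2) / ω₁ (t, p.2)) p.1 from rfl, hl, hr] at this
    exact this
  -- solve for the derivatives of θ₁
  have hs : pdx θ₁ p
      = (ω₂ p * pdy ω₁ p - ω₁ p * pdy ω₂ p - pdx ω₁ p * θ₁ p) / ω₁ p := by
    have h : pdx ω₁ p * θ₁ p + ω₁ p * pdx θ₁ p
        = ω₂ p * pdy ω₁ p - ω₁ p * pdy ω₂ p := by
      rw [hE1]; field_simp; ring
    field_simp
    linarith
  have hr : pdy θ₁ p
      = (ω₁ p * pdx ω₂ p - ω₂ p * pdx ω₁ p - pdy ω₁ p * θ₁ p) / ω₁ p := by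
    have h : pdy ω₁ p * θ₁ p + ω₁ p * pdy θ₁ p
        = ω₁ p * pdx ω₂ p - ω₂ p * pdx ω₁ p := by
      rw [hE2]; field_simp
    field_simp
    linarith
  -- derivatives of θ₂
  have Tx := ((H1x.div H2x ha2).neg.mul Hθx)
  have Ty := ((H1y.div H2y ha2).neg.mul Hθy)
  have hPx : pdx (fun q => -(ω₁ q / ω₂ q) * θ₁ q) p
      = -((pdx ω₁ p * ω₂ p - ω₁ p * pdx ω₂ p) / (ω₂ p) ^ 2) * θ₁ p
        + -(ω₁ p / ω₂ p) * pdx θ₁ p := Tx.deriv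
  have hPy : pdy (fun q => -(ω₁ q / ω₂ q) * θ₁ q) p
      = -((pdy ω₁ p * ω₂ p - ω₁ p * pdy ω₂ p) / (ω₂ p) ^ 2) * θ₁ p
        + -(ω₁ p / ω₂ p) * pdy θ₁ p := Ty.deriv
  rw [hPx, hPy, hs, hr]
  field_simp
  ring
end
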